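/- If f ∈ ℂ[X,Y] satisfies r·f = f and s·f = −f, then f belongs to the principal ideal generated by X^n − Y^n. -/

import Mathlib

/-! Evaluating at a point `(a, b)` of any `ℂ`-algebra, `r` moves the point to `(ζa, ζ⁻¹b)` and `s`
swaps its coordinates. Hence `(ζᵏt, t)` and `(t, ζᵏt)` lie in one `⟨r⟩`-orbit and are exchanged
by `s`, so `f(ζᵏt, t) = f(t, ζᵏt) = -f(ζᵏt, t)`, which forces `f(ζᵏt, t) = 0`. Viewed as a
polynomial in `X` over `ℂ[Y]`, `f` thus vanishes at the `n` distinct roots `ζᵏY` of the monic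
polynomial `Xⁿ - Yⁿ`, so it is divisible by it. -/

open MvPolynomial

noncomputable section

/-- The action of the generator `r` of the dihedral group `D_n` on `ℂ[X,Y]`:
the `ℂ`-algebra automorphism determined by `X ↦ ζ·X`, `Y ↦ ζ⁻¹·Y`. -/
def rAct (ζ : ℂ) : MvPolynomial (Fin 2) ℂ →ₐ[ℂ] MvPolynomial (Fin 2) ℂ :=
  aeval ![ζ • X 0, ζ⁻¹ • X 1]

/-- The action of the generator `s` of the dihedral group `D_n` on `ℂ[X,Y]`:
the `ℂ`-algebra automorphism determined by `X ↦ Y`, `Y ↦ X`. -/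
def sAct : MvPolynomial (Fin 2) ℂ →ₐ[ℂ] MvPolynomial (Fin 2) ℂ :=
  aeval ![X 1, X 0]

theorem X_pow_sub_C_dvd_of_isRoot {R : Type*} [CommRing R] [IsDomain R] {n : ℕ} (hn : 0 < n)
    {ζ : R} (hζ : IsPrimitiveRoot ζ n) {y : R} (hy : y ≠ 0) {p : Polynomial R}
    (hp : ∀ k < n, p.IsRoot (ζ ^ k * y)) :
    Polynomial.X ^ n - Polynomial.C (y ^ n) ∣ p := by
  classical
  rcases eq_or_ne p 0 with rfl | hp0
  · exact dvd_zero _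
  rw [X_pow_sub_C_eq_prod hζ hn rfl,
    ← Finset.prod_image (f := fun a ↦ Polynomial.X - Polynomial.C a) (hζ.injOn_pow_mul hy),
    Finset.prod_eq_multiset_prod, Multiset.prod_X_sub_C_dvd_iff_le_roots hp0,
    Multiset.le_iff_subset (Finset.nodup _)]
  intro a ha
  obtain ⟨k, hk, rfl⟩ := Finset.mem_image.mp (Finset.mem_val.mp ha)
  exact (Polynomial.mem_roots hp0).mpr (hp k (Finset.mem_range.mp hk))

section DihedralAction

variable {A : Type*} [CommRing A] [Algebra ℂ A] {ζ : ℂ} {f : MvPolynomial (Fin 2) ℂ}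

theorem aeval_rAct (ζ : ℂ) (f : MvPolynomial (Fin 2) ℂ) (a b : A) :
    aeval ![a, b] (rAct ζ f) = aeval ![ζ • a, ζ⁻¹ • b] f := by
  rw [rAct, ← AlgHom.comp_apply, comp_aeval]
  congr 2
  ext i
  fin_cases i <;> simp

theorem aeval_sAct (f : MvPolynomial (Fin 2) ℂ) (a b : A) :
    aeval ![a, b] (sAct f) = aeval ![b, a] f := by
  rw [sAct, ← AlgHom.comp_apply, comp_aeval]
  congr 2
  ext i
  fin_cases i <;> simp

theorem aeval_pow_smul_of_rAct_eq (hr : rAct ζ f = f) (k : ℕ) (a b : A) :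
    aeval ![ζ ^ k • a, ζ⁻¹ ^ k • b] f = aeval ![a, b] f := by
  induction k generalizing a b with
  | zero => simp
  | succ k ih => rw [pow_succ', pow_succ', mul_smul, mul_smul, ← aeval_rAct, hr, ih]

theorem aeval_pow_smul_self_eq_zero (hζ : ζ ≠ 0) (hr : rAct ζ f = f) (hs : sAct f = -f)
    (k : ℕ) (t : A) : aeval ![ζ ^ k • t, t] f = 0 := by
  set p := aeval ![ζ ^ k • t, t] f
  have hswap : aeval ![t, ζ ^ k • t] f = p := by
    simpa [smul_smul, inv_mul_cancel₀ (pow_ne_zero k hζ)] using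
      (aeval_pow_smul_of_rAct_eq hr k t (ζ ^ k • t)).symm
  have hanti : aeval ![t, ζ ^ k • t] f = -p := by
    rw [← aeval_sAct, hs, map_neg]
  have htwo : (2 : ℂ) • p = 0 := by
    rw [two_smul, ← eq_neg_iff_add_eq_zero]
    exact hswap.symm.trans hanti
  exact (smul_eq_zero.mp htwo).resolve_left two_ne_zero

end DihedralAction

section FinSuccEquiv

variable {R : Type*} [CommRing R]

theorem finSuccEquiv_X_one : finSuccEquiv R 1 (X 1) = Polynomial.C (X 0) :=
  finSuccEquiv_X_succ (j := 0)

theorem finSuccEquiv_X_pow_sub_X_pow (n : ℕ) :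
    finSuccEquiv R 1 (X 0 ^ n - X 1 ^ n) = Polynomial.X ^ n - Polynomial.C (X 0 ^ n) := by
  rw [map_sub, map_pow, map_pow, finSuccEquiv_X_zero, finSuccEquiv_X_one, Polynomial.C_pow]

theorem eval_finSuccEquiv_eq_aeval (f : MvPolynomial (Fin 2) R)
    (c : MvPolynomial (Fin 1) R) : (finSuccEquiv R 1 f).eval c = aeval ![c, X 0] f := by
  rw [← Polynomial.coe_aeval_eq_eval, ← AlgHom.coe_restrictScalars' R, ← AlgEquiv.coe_toAlgHom,
    ← AlgHom.comp_apply]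
  congr 1
  ext i
  fin_cases i <;> simp [finSuccEquiv_X_zero, finSuccEquiv_X_one]

end FinSuccEquiv

theorem stmt_10_general (n : ℕ) (hn : 3 ≤ n) (ζ : ℂ) (hζ : IsPrimitiveRoot ζ n)
    (f : MvPolynomial (Fin 2) ℂ) (hr : rAct ζ f = f) (hs : sAct f = -f) :
    f ∈ Ideal.span {(X 0 : MvPolynomial (Fin 2) ℂ) ^ n - X 1 ^ n} := by
  have hn0 : 0 < n := by omega
  rw [Ideal.mem_span_singleton, ← map_dvd_iff (finSuccEquiv ℂ 1), finSuccEquiv_X_pow_sub_X_pow]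
  refine X_pow_sub_C_dvd_of_isRoot hn0
    (hζ.map_of_injective (algebraMap ℂ (MvPolynomial (Fin 1) ℂ)).injective) (X_ne_zero 0)
    fun k _ => ?_
  rw [Polynomial.IsRoot, eval_finSuccEquiv_eq_aeval, ← map_pow, ← Algebra.smul_def]
  exact aeval_pow_smul_self_eq_zero (hζ.ne_zero hn0.ne') hr hs k _

/-- Let `n ≥ 3` be odd, `ζ` a primitive `n`-th root of unity, and let the dihedral group
`W = D_n` act on `ℂ[X,Y]` by `r·X = ζX`, `r·Y = ζ⁻¹Y`, `s·X = Y`, `s·Y = X`.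
If `f ∈ ℂ[X,Y]` satisfies `r·f = f` and `s·f = -f`, then `f` belongs to the principal
ideal generated by `Xⁿ - Yⁿ`. -/
theorem stmt_10 (n : ℕ) (hn : 3 ≤ n) (hodd : Odd n) (ζ : ℂ) (hζ : IsPrimitiveRoot ζ n)
    (f : MvPolynomial (Fin 2) ℂ) (hr : rAct ζ f = f) (hs : sAct f = -f) :
    f ∈ Ideal.span {(X 0 : MvPolynomial (Fin 2) ℂ) ^ n - X 1 ^ n} :=
  stmt_10_general n hn ζ hζ f hr hs

end
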